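/- Every sound cyclic deterministic negotiation has a loop, i.e., there exists a reachable marking x and a nonempty occurrence sequence σ with x →σ x. -/
import Mathlib


universe u v w

/-- A (distributed) negotiation over a finite set of agents, a type of atoms and a type
of result names.  `atoms` is the finite set of negotiation atoms, `n0`/`nf` the initial
and final atoms, `parties n` the parties of atom `n`, `results n` its finite set of
results, and `trans n p r` the set of atoms agent `p` is ready to engage in after the
outcome `(n, r)`. -/
structure Negotiation (Agent : Type u) (Atom : Type v) (Res : Type w)
    [Fintype Agent] [DecidableEq Agent] [DecidableEq Atom] [DecidableEq Res] where
  atoms : Finset Atom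
  n0 : Atom
  nf : Atom
  parties : Atom → Finset Agent
  results : Atom → Finset Res
  trans : Atom → Agent → Res → Finset Atom
  n0_mem : n0 ∈ atoms
  nf_mem : nf ∈ atoms
  parties_nonempty : ∀ n ∈ atoms, (parties n).Nonempty
  results_nonempty : ∀ n ∈ atoms, (results n).Nonempty
  parties_n0 : parties n0 = Finset.univ
  parties_nf : parties nf = Finset.univ
  trans_sub : ∀ n ∈ atoms, ∀ p ∈ parties n, ∀ r ∈ results n, trans n p r ⊆ atoms
  trans_parties : ∀ n ∈ atoms, ∀ p ∈ parties n, ∀ r ∈ results n, ∀ n' ∈ trans n p r, p ∈ parties n'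
  trans_empty_iff : ∀ n ∈ atoms, ∀ p ∈ parties n, ∀ r ∈ results n, (trans n p r = ∅ ↔ n = nf)
  on_path : ∀ n ∈ atoms,
    Relation.ReflTransGen (fun a b => ∃ p ∈ parties a, ∃ r ∈ results a, b ∈ trans a p r) n0 n ∧
    Relation.ReflTransGen (fun a b => ∃ p ∈ parties a, ∃ r ∈ results a, b ∈ trans a p r) n nf

namespace Negotiation

variable {Agent : Type u} {Atom : Type v} {Res : Type w}
variable [Fintype Agent] [DecidableEq Agent] [DecidableEq Atom] [DecidableEq Res]

/-- A marking assigns to each agent the set of atoms it is ready to engage in. -/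
def Marking (Agent : Type u) (Atom : Type v) : Type (max u v) := Agent → Finset Atom

/-- A marking enables an atom if every party of the atom is ready to engage in it. -/
def Enables (N : Negotiation Agent Atom Res) (x : Marking Agent Atom) (n : Atom) : Prop :=
  n ∈ N.atoms ∧ ∀ p ∈ N.parties n, n ∈ x p

/-- Small step: the occurrence of the outcome `o = (n, r)` from marking `x` yields `y`. -/
def StepTo (N : Negotiation Agent Atom Res) (x : Marking Agent Atom) (o : Atom × Res)
    (y : Marking Agent Atom) : Prop :=
  N.Enables x o.1 ∧ o.2 ∈ N.results o.1 ∧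
    ∀ p, y p = if p ∈ N.parties o.1 then N.trans o.1 p o.2 else x p

/-- Occurrence sequences: `Seq N x σ y` means the finite sequence of outcomes `σ`
can occur from marking `x` and leads to marking `y`. -/
inductive Seq (N : Negotiation Agent Atom Res) :
    Marking Agent Atom → List (Atom × Res) → Marking Agent Atom → Prop
  | nil (x : Marking Agent Atom) : Seq N x [] x
  | cons {x y z : Marking Agent Atom} {o : Atom × Res} {σ : List (Atom × Res)} :
      N.StepTo x o y → Seq N y σ z → Seq N x (o :: σ) z

/-- The initial marking. -/
def x0 (N : Negotiation Agent Atom Res) : Marking Agent Atom := fun _ => {N.n0}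

/-- The final marking. -/
def xf (_N : Negotiation Agent Atom Res) : Marking Agent Atom := fun _ => ∅

/-- A marking is reachable if some occurrence sequence leads to it from the initial marking. -/
def Reachable (N : Negotiation Agent Atom Res) (x : Marking Agent Atom) : Prop :=
  ∃ σ, N.Seq N.x0 σ x

/-- A large step is an occurrence sequence from the initial to the final marking. -/
def LargeStep (N : Negotiation Agent Atom Res) (σ : List (Atom × Res)) : Prop :=
  N.Seq N.x0 σ N.xf

/-- Soundness: every atom is enabled at some reachable marking, and from every
reachable marking the final marking is reachable. -/
def Sound (N : Negotiation Agent Atom Res) : Prop :=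
  (∀ n ∈ N.atoms, ∃ x, N.Reachable x ∧ N.Enables x n) ∧
  (∀ x, N.Reachable x → ∃ τ, N.Seq x τ N.xf)

/-- An agent is deterministic if it is never ready to engage in more than one atom. -/
def DeterministicAgent (N : Negotiation Agent Atom Res) (p : Agent) : Prop :=
  ∀ n ∈ N.atoms, n ≠ N.nf → p ∈ N.parties n → ∀ r ∈ N.results n, ∃ n', N.trans n p r = {n'}

/-- A negotiation is deterministic if all its agents are. -/
def Deterministic (N : Negotiation Agent Atom Res) : Prop := ∀ p, N.DeterministicAgent p

/-- Weak determinism: for every `(n, p, r)` there is a deterministic agent which is a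
party of every atom in `trans n p r`. -/
def WeaklyDeterministic (N : Negotiation Agent Atom Res) : Prop :=
  ∀ n ∈ N.atoms, ∀ p ∈ N.parties n, ∀ r ∈ N.results n,
    ∃ b, N.DeterministicAgent b ∧ ∀ n' ∈ N.trans n p r, b ∈ N.parties n'

/-- The edge relation of the graph of a negotiation. -/
def Edge (N : Negotiation Agent Atom Res) (a b : Atom) : Prop :=
  a ∈ N.atoms ∧ b ∈ N.atoms ∧ ∃ p ∈ N.parties a, ∃ r ∈ N.results a, b ∈ N.trans a p r

/-- A negotiation is acyclic if its graph has no cycles. -/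
def Acyclic (N : Negotiation Agent Atom Res) : Prop :=
  ∀ n, ¬ Relation.TransGen N.Edge n n

/-- The arc `(n, p, r, n')` occurs in the occurrence sequence `σ`. -/
def ArcOccursIn (N : Negotiation Agent Atom Res) (n : Atom) (p : Agent) (r : Res) (n' : Atom)
    (σ : List (Atom × Res)) : Prop :=
  ∃ (σ1 σ2 σ3 : List (Atom × Res)) (r' : Res), r' ∈ N.results n' ∧
    σ = σ1 ++ (n, r) :: σ2 ++ (n', r') :: σ3 ∧ ∀ o ∈ σ2, p ∉ N.parties o.1

/-- The outcome `(n, r)` unconditionally enables the atom `n'`. -/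
def UncondEnables (N : Negotiation Agent Atom Res) (n : Atom) (r : Res) (n' : Atom) : Prop :=
  N.parties n' ⊆ N.parties n ∧ ∀ p ∈ N.parties n', N.trans n p r = {n'}

/-- The outcome `(n, r)` has exclusive access to the atom `n'`. -/
def ExclusiveAccess (N : Negotiation Agent Atom Res) (n : Atom) (r : Res) (n' : Atom) : Prop :=
  ∀ p ∈ N.parties n', n' ∈ N.trans n p r ∧
    ∀ m ∈ N.atoms, ∀ r'' ∈ N.results m, (m, r'') ≠ (n, r) → n' ∉ N.trans m p r''

/-- The outcome `(m, r'')` commits to the atom `n'`. -/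
def CommitsTo (N : Negotiation Agent Atom Res) (m : Atom) (r'' : Res) (n' : Atom) : Prop :=
  ∃ p ∈ N.parties m, N.trans m p r'' = {n'}

/-- The merge rule: two results of a non-final atom with identical transition functions
are merged into a fresh result. -/
def MergeRule (N1 N2 : Negotiation Agent Atom Res) : Prop :=
  ∃ (n : Atom) (r1 r2 r : Res), n ∈ N1.atoms ∧ n ≠ N1.nf ∧
    r1 ∈ N1.results n ∧ r2 ∈ N1.results n ∧ r1 ≠ r2 ∧
    (∀ p ∈ N1.parties n, N1.trans n p r1 = N1.trans n p r2) ∧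
    r ∉ N1.results n ∧
    N2.atoms = N1.atoms ∧ N2.n0 = N1.n0 ∧ N2.nf = N1.nf ∧ N2.parties = N1.parties ∧
    N2.results n = insert r (((N1.results n).erase r1).erase r2) ∧
    (∀ m, m ≠ n → N2.results m = N1.results m) ∧
    (∀ p, N2.trans n p r = N1.trans n p r1) ∧
    (∀ p, ∀ r'' ∈ ((N1.results n).erase r1).erase r2, N2.trans n p r'' = N1.trans n p r'') ∧
    (∀ m, m ≠ n → N2.trans m = N1.trans m)

/-- The iteration rule: a result after which all parties return to the same atom is removed. -/
def IterationRule (N1 N2 : Negotiation Agent Atom Res) : Prop :=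
  ∃ (n : Atom) (r : Res), n ∈ N1.atoms ∧ r ∈ N1.results n ∧
    (∀ p ∈ N1.parties n, N1.trans n p r = {n}) ∧
    N2.atoms = N1.atoms ∧ N2.n0 = N1.n0 ∧ N2.nf = N1.nf ∧ N2.parties = N1.parties ∧
    N2.results n = (N1.results n).erase r ∧
    (∀ m, m ≠ n → N2.results m = N1.results m) ∧
    N2.trans = N1.trans

/-- The useless arc rule: under the guard consisting of three distinct arcs
`(n,p,r,n')`, `(n,p,r,n'')`, `(n,q,r,n')` with `trans n q r = {n'}`, the arc
`(n,p,r,n'')` is removed (and the result is again a negotiation, since `N2` is one). -/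
def UselessArcRule (N1 N2 : Negotiation Agent Atom Res) : Prop :=
  ∃ (n : Atom) (p q : Agent) (r : Res) (n' n'' : Atom),
    n ∈ N1.atoms ∧ p ∈ N1.parties n ∧ q ∈ N1.parties n ∧ r ∈ N1.results n ∧
    p ≠ q ∧ n' ≠ n'' ∧
    n' ∈ N1.trans n p r ∧ n'' ∈ N1.trans n p r ∧ N1.trans n q r = {n'} ∧
    N2.atoms = N1.atoms ∧ N2.n0 = N1.n0 ∧ N2.nf = N1.nf ∧
    N2.parties = N1.parties ∧ N2.results = N1.results ∧
    N2.trans n p r = (N1.trans n p r).erase n'' ∧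
    (∀ (m : Atom) (p' : Agent) (r' : Res), (m, p', r') ≠ (n, p, r) →
      N2.trans m p' r' = N1.trans m p' r')

/-- The shortcut rule applied to the outcome `(n, r)` which unconditionally enables `n'`,
using `f` to produce the fresh result names `r'_s = f r'`. -/
def ShortcutRuleAt (N1 N2 : Negotiation Agent Atom Res) (n : Atom) (r : Res) (n' : Atom)
    (f : Res → Res) : Prop :=
  n ∈ N1.atoms ∧ n' ∈ N1.atoms ∧ r ∈ N1.results n ∧ n' ≠ n ∧
  N1.UncondEnables n r n' ∧
  ((n' ≠ N1.nf ∧ N1.ExclusiveAccess n r n') ∨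
   (n' ≠ N1.nf ∧ ∃ (m : Atom) (r'' : Res), m ∈ N1.atoms ∧ r'' ∈ N1.results m ∧
      (m, r'') ≠ (n, r) ∧ N1.CommitsTo m r'' n') ∨
   (n' = N1.nf ∧ N1.ExclusiveAccess n r n' ∧ N1.results n = {r})) ∧
  Set.InjOn f ↑(N1.results n') ∧ (∀ r' ∈ N1.results n', f r' ∉ N1.results n) ∧
  N2.n0 = N1.n0 ∧ N2.parties = N1.parties ∧
  N2.results n = ((N1.results n).erase r) ∪ (N1.results n').image f ∧
  (∀ m, m ≠ n → N2.results m = N1.results m) ∧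
  (∀ r' ∈ N1.results n', ∀ p ∈ N1.parties n', N2.trans n p (f r') = N1.trans n' p r') ∧
  (∀ r' ∈ N1.results n', ∀ p ∈ N1.parties n, p ∉ N1.parties n' →
      N2.trans n p (f r') = N1.trans n p r) ∧
  (∀ r'' ∈ (N1.results n).erase r, ∀ p, N2.trans n p r'' = N1.trans n p r'') ∧
  (∀ m, m ≠ n → N2.trans m = N1.trans m) ∧
  (N1.ExclusiveAccess n r n' → N2.atoms = N1.atoms.erase n') ∧
  (¬ N1.ExclusiveAccess n r n' → N2.atoms = N1.atoms) ∧
  ((n' = N1.nf ∧ N1.ExclusiveAccess n r n') → N2.nf = n) ∧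
  (¬ (n' = N1.nf ∧ N1.ExclusiveAccess n r n') → N2.nf = N1.nf)

/-- The shortcut rule as a relation between negotiations. -/
def ShortcutRule (N1 N2 : Negotiation Agent Atom Res) : Prop :=
  ∃ n r n' f, ShortcutRuleAt N1 N2 n r n' f

/-- The deterministic shortcut rule: the shortcut rule restricted to the case where the
unconditionally enabled atom has at most one result. -/
def DShortcutRule (N1 N2 : Negotiation Agent Atom Res) : Prop :=
  ∃ n r n' f, ShortcutRuleAt N1 N2 n r n' f ∧ (N1.results n').card ≤ 1

/-- A negotiation is irreducible if none of the four reduction rules is applicable. -/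
def Irreducible (N : Negotiation Agent Atom Res) : Prop :=
  ∀ N' : Negotiation Agent Atom Res,
    ¬ (MergeRule N N' ∨ IterationRule N N' ∨ UselessArcRule N N' ∨ ShortcutRule N N')

/-- The marking `x_n` that puts exactly the parties of `n` on `n`. -/
def xAt (N : Negotiation Agent Atom Res) (n : Atom) : Marking Agent Atom :=
  fun p => if p ∈ N.parties n then {n} else ∅

/-- An `(n, r)`-sequence: a finite occurrence sequence from `x_n` starting with the
outcome `(n, r)` all of whose atoms have their parties included in the parties of `n`. -/
def NRSeq (N : Negotiation Agent Atom Res) (n : Atom) (r : Res)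
    (σ : List (Atom × Res)) : Prop :=
  (∃ τ, σ = (n, r) :: τ) ∧ (∃ y, N.Seq (N.xAt n) σ y) ∧
    ∀ o ∈ σ, N.parties o.1 ⊆ N.parties n

/-- The index of the outcome `(n, r)`: the length of a longest (maximal) `(n,r)`-sequence
minus one. -/
noncomputable def outcomeIndex (N : Negotiation Agent Atom Res) (n : Atom) (r : Res) : ℕ :=
  sSup {l : ℕ | ∃ σ, N.NRSeq n r σ ∧ σ.length = l} - 1

/-- The index of a negotiation: the sum of the indices of all non-final outcomes. -/
noncomputable def negIndex (N : Negotiation Agent Atom Res) : ℕ :=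
  (N.atoms.filter (fun n => n ≠ N.nf)).sum
    (fun n => (N.results n).sum (fun r => N.outcomeIndex n r))

/-- An `n`-sequence: an `(n, r)`-sequence for some result `r` of `n`. -/
def NSeq (N : Negotiation Agent Atom Res) (n : Atom) (σ : List (Atom × Res)) : Prop :=
  (∃ r ∈ N.results n, ∃ τ, σ = (n, r) :: τ) ∧ (∃ y, N.Seq (N.xAt n) σ y) ∧
    ∀ o ∈ σ, N.parties o.1 ⊆ N.parties n

/-- A maximal `n`-sequence: it cannot be extended to a longer `n`-sequence. -/
def MaximalNSeq (N : Negotiation Agent Atom Res) (n : Atom) (σ : List (Atom × Res)) : Prop :=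
  N.NSeq n σ ∧ ∀ o : Atom × Res, ¬ N.NSeq n (σ ++ [o])

/-- An outcome `(n, r)` is uniform: all parties of `n` move to the same set of atoms. -/
def Uniform (N : Negotiation Agent Atom Res) (n : Atom) (r : Res) : Prop :=
  ∀ p ∈ N.parties n, ∀ q ∈ N.parties n, N.trans n p r = N.trans n q r

/-- A replication: all atoms have the same parties and all outcomes are uniform. -/
def Replication (N : Negotiation Agent Atom Res) : Prop :=
  (∀ n ∈ N.atoms, ∀ m ∈ N.atoms, N.parties n = N.parties m) ∧
  (∀ n ∈ N.atoms, ∀ r ∈ N.results n, N.Uniform n r)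

/-- A path of a negotiation: a list of triples `(nᵢ, pᵢ, rᵢ)` with `nᵢ₊₁ ∈ trans nᵢ pᵢ rᵢ`. -/
def IsPath (N : Negotiation Agent Atom Res) (π : List (Atom × Agent × Res)) : Prop :=
  (∀ t ∈ π, t.1 ∈ N.atoms ∧ t.2.1 ∈ N.parties t.1 ∧ t.2.2 ∈ N.results t.1) ∧
  π.Chain' (fun s t => t.1 ∈ N.trans s.1 s.2.1 s.2.2)

/-- A loop: a nonempty sequence of outcomes leading from some reachable marking back to itself. -/
def IsLoop (N : Negotiation Agent Atom Res) (σ : List (Atom × Res)) : Prop :=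
  σ ≠ [] ∧ ∃ x, N.Reachable x ∧ N.Seq x σ x

end Negotiation

namespace Negotiation
variable {Agent : Type u} {Atom : Type v} {Res : Type w}
variable [Fintype Agent] [DecidableEq Agent] [DecidableEq Atom] [DecidableEq Res]

lemma Seq.append {N : Negotiation Agent Atom Res} {x y z : Marking Agent Atom}
    {σ τ : List (Atom × Res)} (h1 : N.Seq x σ y) (h2 : N.Seq y τ z) :
    N.Seq x (σ ++ τ) z := by
  induction h1 with
  | nil => simpa using h2
  | cons hst _ ih => exact Seq.cons hst (ih h2)

lemma Reachable.seq {N : Negotiation Agent Atom Res} {x y : Marking Agent Atom}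
    {σ : List (Atom × Res)} (hx : N.Reachable x) (h : N.Seq x σ y) : N.Reachable y := by
  obtain ⟨τ, hτ⟩ := hx; exact ⟨τ ++ σ, hτ.append h⟩

lemma reach_sub {N : Negotiation Agent Atom Res} {x : Marking Agent Atom}
    (hx : N.Reachable x) : ∀ p, x p ⊆ N.atoms := by
  obtain ⟨σ, hσ⟩ := hx
  have key : ∀ (u v : Marking Agent Atom) (τ : List (Atom × Res)), N.Seq u τ v →
      (∀ p, u p ⊆ N.atoms) → ∀ p, v p ⊆ N.atoms := by
    intro u v τ h
    induction h with
    | nil => exact fun h => h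
    | @cons x y z o σ hst _ ih =>
      intro hu
      apply ih
      intro p
      obtain ⟨⟨hmem, hen⟩, hr, hy⟩ := hst
      rw [hy p]
      split
      · exact N.trans_sub _ hmem _ ‹_› _ hr
      · exact hu p
  apply key _ _ _ hσ
  intro p a ha
  simp only [x0, Finset.mem_singleton] at ha
  subst ha
  exact N.n0_mem

lemma eventually_enabled {N : Negotiation Agent Atom Res} :
    ∀ {x z : Marking Agent Atom} {τ : List (Atom × Res)}, N.Seq x τ z →
      ∀ {p : Agent} {b : Atom}, z p = ∅ → x p = {b} →
      ∃ σ y, N.Seq x σ y ∧ N.Enables y b := by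
  intro x z τ h
  induction h with
  | nil x =>
    intro p b hz hx
    rw [hz] at hx
    exact absurd hx.symm (Finset.singleton_ne_empty b)
  | @cons x y z o σ hst hs ih =>
    intro p b hz hx
    by_cases hp : p ∈ N.parties o.1
    · have hob : o.1 ∈ x p := hst.1.2 p hp
      rw [hx, Finset.mem_singleton] at hob
      exact ⟨[], x, Seq.nil x, hob ▸ hst.1⟩
    · have hy : y p = {b} := by rw [hst.2.2 p, if_neg hp, hx]
      obtain ⟨σ', y', h1, h2⟩ := ih hz hy
      exact ⟨o :: σ', y', Seq.cons hst h1, h2⟩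

lemma step_along {N : Negotiation Agent Atom Res} (hs : N.Sound) (hd : N.Deterministic)
    {x : Marking Agent Atom} {a : Atom} (hx : N.Reachable x) (ha : N.Enables x a)
    {p : Agent} {r : Res} {b : Atom}
    (hp : p ∈ N.parties a) (hr : r ∈ N.results a) (hb : b ∈ N.trans a p r) :
    ∃ σ y, σ ≠ [] ∧ N.Seq x σ y ∧ N.Enables y b ∧ N.Reachable y := by
  have hA : a ∈ N.atoms := ha.1
  have hanf : a ≠ N.nf := by
    intro h
    have := (N.trans_empty_iff a hA p hp r hr).2 h
    rw [this] at hb; simp at hb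
  obtain ⟨b', hb'⟩ := hd p a hA hanf hp r hr
  have hbb : N.trans a p r = {b} := by
    rw [hb'] at hb ⊢
    rw [Finset.mem_singleton] at hb
    rw [hb]
  set y1 : Marking Agent Atom := fun q => if q ∈ N.parties a then N.trans a q r else x q
    with hy1
  have hstep : N.StepTo x (a, r) y1 := ⟨ha, hr, fun q => rfl⟩
  have hy1p : y1 p = {b} := by simp only [hy1, if_pos hp]; exact hbb
  have hy1r : N.Reachable y1 := hx.seq (Seq.cons hstep (Seq.nil y1))
  obtain ⟨τ, hτ⟩ := hs.2 y1 hy1r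
  obtain ⟨σ', y, h1, h2⟩ := eventually_enabled hτ (p := p) rfl hy1p
  exact ⟨(a, r) :: σ', y, by simp, Seq.cons hstep h1, h2, hy1r.seq h1⟩

lemma along_path {N : Negotiation Agent Atom Res} (hs : N.Sound) (hd : N.Deterministic)
    {m n' : Atom} (h : Relation.ReflTransGen N.Edge m n') :
    ∀ {x : Marking Agent Atom}, N.Reachable x → N.Enables x m →
      ∃ σ y, N.Seq x σ y ∧ N.Enables y n' ∧ N.Reachable y := by
  induction h using Relation.ReflTransGen.head_induction_on with
  | refl => intro x hx hm; exact ⟨[], x, Seq.nil x, hm, hx⟩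
  | head hedge _ ih =>
    intro x hx hm
    obtain ⟨_, _, p, hp, r, hr, hb⟩ := hedge
    obtain ⟨σ, y, _, h1, h2, h3⟩ := step_along hs hd hx hm hp hr hb
    obtain ⟨σ', y', h1', h2', h3'⟩ := ih h3 h2
    exact ⟨σ ++ σ', y', h1.append h1', h2', h3'⟩

lemma cycle_step {N : Negotiation Agent Atom Res} (hs : N.Sound) (hd : N.Deterministic)
    {n : Atom} (hcyc : Relation.TransGen N.Edge n n)
    {x : Marking Agent Atom} (hx : N.Reachable x) (hn : N.Enables x n) :
    ∃ σ y, σ ≠ [] ∧ N.Seq x σ y ∧ N.Enables y n ∧ N.Reachable y := by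
  obtain ⟨m, h1, h2⟩ := Relation.TransGen.head'_iff.1 hcyc
  obtain ⟨_, _, p, hp, r, hr, hb⟩ := h1
  obtain ⟨σ, y, h0, hσ, he, hre⟩ := step_along hs hd hx hn hp hr hb
  obtain ⟨σ', y', h1', h2', h3'⟩ := along_path hs hd h2 hre he
  exact ⟨σ ++ σ', y', by simp [h0], hσ.append h1', h2', h3'⟩

/-- Every sound cyclic deterministic negotiation has a loop. -/
theorem statement13 (N : Negotiation Agent Atom Res) (hs : N.Sound) (hd : N.Deterministic)
    (hcyc : ∃ n : Atom, Relation.TransGen N.Edge n n) :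
    ∃ (x : Marking Agent Atom) (σ : List (Atom × Res)),
      N.Reachable x ∧ σ ≠ [] ∧ N.Seq x σ x := by
  obtain ⟨n, hcyc⟩ := hcyc
  have hnA : n ∈ N.atoms := by
    obtain ⟨m, h1, _⟩ := Relation.TransGen.head'_iff.1 hcyc
    exact h1.1
  obtain ⟨xs, hxr, hxe⟩ := hs.1 n hnA
  set P : Marking Agent Atom → Prop := fun x => N.Reachable x ∧ N.Enables x n with hP
  have hstep : ∀ s : {x // P x}, ∃ t : {x // P x}, ∃ σ, σ ≠ [] ∧ N.Seq s.1 σ t.1 := by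
    rintro ⟨x, hx, he⟩
    obtain ⟨σ, y, h0, h1, h2, h3⟩ := cycle_step hs hd hcyc hx he
    exact ⟨⟨y, h3, h2⟩, σ, h0, h1⟩
  choose f σf hσne hσ using hstep
  set g : ℕ → {x // P x} := fun k => f^[k] ⟨xs, hxr, hxe⟩ with hg
  have hgsucc : ∀ k, g (k + 1) = f (g k) := by
    intro k
    simp only [hg]
    exact Function.iterate_succ_apply' f k _
  have hchain : ∀ i k, 0 < k → ∃ σ, σ ≠ [] ∧ N.Seq (g i).1 σ (g (i + k)).1 := by
    intro i k hk
    induction k with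
    | zero => omega
    | succ k ih =>
      rcases Nat.eq_zero_or_pos k with hk0 | hk0
      · subst hk0
        refine ⟨σf (g i), hσne _, ?_⟩
        have := hσ (g i)
        rwa [← hgsucc i] at this
      · obtain ⟨σ, h0, h1⟩ := ih hk0
        refine ⟨σ ++ σf (g (i + k)), by simp [h0], ?_⟩
        have h2 := hσ (g (i + k))
        rw [← hgsucc (i + k)] at h2
        have : i + (k + 1) = (i + k) + 1 := by omega
        rw [this]
        exact h1.append h2
  -- finiteness of reachable markings
  have hTfin : (Set.pi (Set.univ : Set Agent)
      (fun _ => {s : Finset Atom | s ⊆ N.atoms})).Finite := by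
    apply Set.Finite.pi
    intro _
    have : {s : Finset Atom | s ⊆ N.atoms} = ↑N.atoms.powerset := by
      ext s; simp
    rw [this]
    exact N.atoms.powerset.finite_toSet
  have hmaps : Set.MapsTo (fun i => (g i).1) (Set.univ : Set ℕ)
      (Set.pi Set.univ (fun _ => {s : Finset Atom | s ⊆ N.atoms})) := by
    intro i _
    intro p _
    exact reach_sub (g i).2.1 p
  obtain ⟨i, -, j, -, hij, heq⟩ :=
    Set.Infinite.exists_ne_map_eq_of_mapsTo Set.infinite_univ hmaps hTfin
  rcases lt_or_gt_of_ne hij with h | h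
  · obtain ⟨σ, h0, h1⟩ := hchain i (j - i) (by omega)
    have hji : i + (j - i) = j := by omega
    rw [hji] at h1
    exact ⟨(g i).1, σ, (g i).2.1, h0, heq ▸ h1⟩
  · obtain ⟨σ, h0, h1⟩ := hchain j (i - j) (by omega)
    have hji : j + (i - j) = i := by omega
    rw [hji] at h1
    exact ⟨(g j).1, σ, (g j).2.1, h0, heq ▸ h1⟩

end Negotiation
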